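/- Under the hypotheses of the decomposition lemma with κ ∈ (0, 1/5], the support sizes satisfy |supp(f₊)| ≤ ((1+ς)/2) n and |supp(f₋)| ≥ ((1-ς)/2) n, where ς = √κ/√(1-κ), assuming additionally |supp(f₊)| ≥ |supp(f₋)|. -/

import Mathlib

/-!
Split `f = fStr f + f_sml`, where `fStr f` is the mean of `|f|` times the sign pattern of `f`.
Since `a` has nonnegative entries, `⟨A|f|, |f|⟩ ≥ -⟨Af, f⟩ = -dμ‖f‖²`, while the spectral gap
bounds `⟨A|f|, |f|⟩` from above through the mean-zero part `|f| - mean |f|`, whose norm is `‖f_sml‖`.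
This gives `‖f_sml‖² ≤ κ‖f‖²`. As `f ⟂ 1`, the sum of `fStr f`, which is proportional to
`|supp f₊| - |supp f₋|`, equals minus that of `f_sml`, and Cauchy–Schwarz bounds the imbalance
by `√(κ / (1 - κ)) n`.
-/

open Finset

/-- The signed indicator `1_{f>0} - 1_{f<0}`. -/
noncomputable def sgnInd {V : Type*} (f : V → ℝ) : V → ℝ :=
  fun v => if 0 < f v then 1 else if f v < 0 then -1 else 0

/-- The structured component `f_str = (1/n)⟨|f|, 1_V⟩(1_{f>0} - 1_{f<0})`. -/
noncomputable def fStr {V : Type*} [Fintype V] (f : V → ℝ) : V → ℝ :=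
  fun v => ((∑ w, f w * sgnInd f w) / (Fintype.card V : ℝ)) * sgnInd f v

def quadForm {V : Type*} [Fintype V] (a : V → V → ℝ) (g : V → ℝ) : ℝ :=
  ∑ u, ∑ v, a u v * g u * g v

section QuadForm

variable {V : Type*} [Fintype V] {a : V → V → ℝ} {d : ℝ}

lemma sum_sum_mul_left (hrow : ∀ u, ∑ v, a u v = d) (g : V → ℝ) :
    ∑ u, ∑ v, a u v * g u = d * ∑ u, g u := by
  simp_rw [← sum_mul, hrow, mul_sum]

lemma sum_sum_mul_right (hsym : ∀ u v, a u v = a v u) (hrow : ∀ u, ∑ v, a u v = d)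
    (g : V → ℝ) : ∑ u, ∑ v, a u v * g v = d * ∑ v, g v := by
  rw [sum_comm, ← sum_sum_mul_left hrow g]
  simp only [hsym]

lemma neg_mul_sum_sq_le_quadForm (hsym : ∀ u v, a u v = a v u) (hnn : ∀ u v, 0 ≤ a u v)
    (hrow : ∀ u, ∑ v, a u v = d) (g : V → ℝ) :
    -(d * ∑ v, g v ^ 2) ≤ quadForm a g := by
  have hsq : 0 ≤ ∑ u, ∑ v, a u v * (g u + g v) ^ 2 :=
    sum_nonneg fun u _ => sum_nonneg fun v _ => mul_nonneg (hnn u v) (sq_nonneg _)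
  have hexp : ∑ u, ∑ v, a u v * (g u + g v) ^ 2 =
      ∑ u, ∑ v, a u v * g u ^ 2 + 2 * quadForm a g + ∑ u, ∑ v, a u v * g v ^ 2 := by
    simp only [quadForm, mul_sum, ← sum_add_distrib]
    exact sum_congr rfl fun u _ => sum_congr rfl fun v _ => by ring
  rw [hexp, sum_sum_mul_left hrow, sum_sum_mul_right hsym hrow] at hsq
  linarith

lemma neg_quadForm_abs_le (hnn : ∀ u v, 0 ≤ a u v) (g : V → ℝ) :
    -quadForm a (fun v => |g v|) ≤ quadForm a g := by
  simp only [quadForm, ← sum_neg_distrib]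
  gcongr with u _ v _
  rw [mul_assoc, mul_assoc, ← abs_mul, ← abs_of_nonneg (hnn u v), ← abs_mul, abs_of_nonneg (hnn u v)]
  exact neg_abs_le _

lemma quadForm_add_const (hsym : ∀ u v, a u v = a v u) (hrow : ∀ u, ∑ v, a u v = d)
    (g : V → ℝ) (c : ℝ) :
    quadForm a (fun v => g v + c) =
      quadForm a g + 2 * c * d * ∑ v, g v + c ^ 2 * d * Fintype.card V := by
  have hexp : quadForm a (fun v => g v + c) = quadForm a g + c * ∑ u, ∑ v, a u v * g u +
      c * ∑ u, ∑ v, a u v * g v + c ^ 2 * ∑ u, ∑ v, a u v := by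
    simp only [quadForm, mul_sum, ← sum_add_distrib]
    exact sum_congr rfl fun u _ => sum_congr rfl fun v _ => by ring
  rw [hexp, sum_sum_mul_left hrow, sum_sum_mul_right hsym hrow]
  simp only [hrow, sum_const, card_univ, nsmul_eq_mul]
  ring

end QuadForm

section Mean

variable {V : Type*} [Fintype V] [Nonempty V]

lemma sum_sub_mean (g : V → ℝ) : ∑ v, (g v - (∑ w, g w) / Fintype.card V) = 0 := by
  rw [sum_sub_distrib, sum_const, card_univ, nsmul_eq_mul, mul_div_cancel₀ _ (by positivity),
    sub_self]

lemma sum_sq_eq_sum_sub_mean_sq_add (g : V → ℝ) :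
    ∑ v, g v ^ 2 =
      ∑ v, (g v - (∑ w, g w) / Fintype.card V) ^ 2 +
        Fintype.card V * ((∑ w, g w) / Fintype.card V) ^ 2 := by
  set m := (∑ w, g w) / Fintype.card V
  have hm : ∑ w, g w = Fintype.card V * m := by
    rw [mul_div_cancel₀ _ (by positivity)]
  simp only [sub_sq, sum_add_distrib, sum_sub_distrib, ← sum_mul, ← mul_sum, sum_const, card_univ,
    nsmul_eq_mul, hm]
  ring

end Mean

section Eigenfunction

variable {V : Type*} [Fintype V] {a : V → V → ℝ} {d μ : ℝ} {f : V → ℝ}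

lemma quadForm_eq_of_eigen (heig : ∀ u, ∑ v, a u v * f v = d * μ * f u) :
    quadForm a f = d * μ * ∑ v, f v ^ 2 := by
  calc quadForm a f = ∑ u, f u * ∑ v, a u v * f v := by
        simp only [quadForm, mul_sum]
        exact sum_congr rfl fun u _ => sum_congr rfl fun v _ => by ring
    _ = d * μ * ∑ v, f v ^ 2 := by
        simp only [heig, mul_sum]
        exact sum_congr rfl fun u _ => by ring

lemma one_add_nonneg_of_eigen (hsym : ∀ u v, a u v = a v u) (hnn : ∀ u v, 0 ≤ a u v)
    (hrow : ∀ u, ∑ v, a u v = d) (hd : 0 < d) (heig : ∀ u, ∑ v, a u v * f v = d * μ * f u)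
    (hf : f ≠ 0) : 0 ≤ 1 + μ := by
  obtain ⟨v, hv⟩ := Function.ne_iff.mp hf
  have hF : 0 < ∑ v, f v ^ 2 :=
    sum_pos' (fun _ _ => sq_nonneg _) ⟨v, mem_univ v, sq_pos_of_ne_zero hv⟩
  have h := neg_mul_sum_sq_le_quadForm hsym hnn hrow f
  rw [quadForm_eq_of_eigen heig] at h
  refine nonneg_of_mul_nonneg_left ?_ (mul_pos hd hF)
  linarith

theorem one_sub_mul_sum_abs_sub_mean_sq_le [Nonempty V] {μ₂ : ℝ}
    (hsym : ∀ u v, a u v = a v u) (hnn : ∀ u v, 0 ≤ a u v)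
    (hrow : ∀ u, ∑ v, a u v = d) (hd : 0 < d)
    (hray : ∀ g : V → ℝ, (∑ v, g v) = 0 → quadForm a g ≤ d * μ₂ * ∑ v, g v ^ 2)
    (heig : ∀ u, ∑ v, a u v * f v = d * μ * f u) :
    (1 - μ₂) * ∑ v, (|f v| - (∑ w, |f w|) / Fintype.card V) ^ 2 ≤ (1 + μ) * ∑ v, f v ^ 2 := by
  set m := (∑ w, |f w|) / Fintype.card V
  set g := fun v => |f v| - m
  have hg : ∑ v, g v = 0 := sum_sub_mean _
  have hpyth : ∑ v, f v ^ 2 = ∑ v, g v ^ 2 + Fintype.card V * m ^ 2 := by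
    simpa only [sq_abs] using sum_sq_eq_sum_sub_mean_sq_add fun v => |f v|
  have habs : quadForm a (fun v => |f v|) = quadForm a g + m ^ 2 * d * Fintype.card V := by
    simpa [g, hg] using quadForm_add_const hsym hrow g m
  have hlow := neg_quadForm_abs_le hnn f
  rw [quadForm_eq_of_eigen heig] at hlow
  have hup := hray g hg
  refine le_of_mul_le_mul_left ?_ hd
  linarith [congrArg (d * ·) hpyth]

end Eigenfunction

section SignDecomposition

variable {V : Type*} {f : V → ℝ}

lemma mul_sgnInd_self (f : V → ℝ) (v : V) : f v * sgnInd f v = |f v| := by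
  rcases lt_trichotomy (f v) 0 with h | h | h
  · simp [sgnInd, h, h.not_gt, abs_of_neg h]
  · simp [sgnInd, h]
  · simp [sgnInd, h, abs_of_pos h]

lemma sgnInd_sq {v : V} (hv : f v ≠ 0) : sgnInd f v ^ 2 = 1 := by
  rcases hv.lt_or_gt with h | h
  · simp [sgnInd, h, h.not_gt]
  · simp [sgnInd, h]

variable [Fintype V]

lemma fStr_apply (f : V → ℝ) (v : V) :
    fStr f v = (∑ w, |f w|) / Fintype.card V * sgnInd f v := by
  simp only [fStr, mul_sgnInd_self]

lemma sub_fStr_sq {v : V} (hv : f v ≠ 0) :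
    (f v - fStr f v) ^ 2 = (|f v| - (∑ w, |f w|) / Fintype.card V) ^ 2 := by
  set c := (∑ w, |f w|) / Fintype.card V
  calc (f v - fStr f v) ^ 2 = sgnInd f v ^ 2 * (f v - c * sgnInd f v) ^ 2 := by
        rw [sgnInd_sq hv, one_mul, fStr_apply]
    _ = (f v * sgnInd f v - c * sgnInd f v ^ 2) ^ 2 := by ring
    _ = (|f v| - c) ^ 2 := by rw [mul_sgnInd_self, sgnInd_sq hv, mul_one]

lemma card_pos_add_card_neg (hnz : ∀ v, f v ≠ 0) :
    #{v | 0 < f v} + #{v | f v < 0} = Fintype.card V := by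
  rw [← card_univ, ← card_filter_add_card_filter_not (s := univ) fun v => 0 < f v]
  congr 2
  ext v
  rw [mem_filter, mem_filter, not_lt, (hnz v).le_iff_lt]

lemma sum_sgnInd (hnz : ∀ v, f v ≠ 0) :
    ∑ v, sgnInd f v = (#{v | 0 < f v} : ℝ) - #{v | f v < 0} := by
  rw [← sum_boole, ← sum_boole, ← sum_sub_distrib]
  refine sum_congr rfl fun v _ => ?_
  rcases (hnz v).lt_or_gt with h | h
  · simp [sgnInd, h, h.not_gt]
  · simp [sgnInd, h, h.not_gt]

theorem one_sub_mul_sq_card_sub_card_le [Nonempty V] {κ : ℝ}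
    (hnz : ∀ v, f v ≠ 0) (horth : ∑ v, f v = 0) (hκ : κ < 1)
    (hdec : ∑ v, (f v - fStr f v) ^ 2 ≤ κ * ∑ v, f v ^ 2) :
    (1 - κ) * ((#{v | 0 < f v} : ℝ) - #{v | f v < 0}) ^ 2 ≤ κ * Fintype.card V ^ 2 := by
  set n : ℝ := (Fintype.card V : ℝ)
  set m := (∑ w, |f w|) / n
  set D : ℝ := (#{v | 0 < f v} : ℝ) - #{v | f v < 0}
  set X := ∑ v, (f v - fStr f v) ^ 2
  have hn : 0 < n := by positivity
  have hm : 0 < m := by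
    obtain ⟨v⟩ := ‹Nonempty V›
    exact div_pos (sum_pos' (fun _ _ => abs_nonneg _) ⟨v, mem_univ v, abs_pos.mpr (hnz v)⟩) hn
  have hX : X = ∑ v, (|f v| - m) ^ 2 := sum_congr rfl fun v _ => sub_fStr_sq (hnz v)
  have hpyth : ∑ v, f v ^ 2 = X + n * m ^ 2 := by
    simpa only [sq_abs, hX] using sum_sq_eq_sum_sub_mean_sq_add fun v => |f v|
  have hsum : ∑ v, (f v - fStr f v) = -(m * D) := by
    simp only [sum_sub_distrib, horth, fStr_apply, ← mul_sum, sum_sgnInd hnz]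
    ring
  have hcs : (m * D) ^ 2 ≤ n * X := by
    simpa [hsum] using sq_sum_le_card_mul_sum_sq (s := univ) (f := fun v => f v - fStr f v)
  have hX_le : (1 - κ) * X ≤ κ * (n * m ^ 2) := by
    rw [hpyth] at hdec
    linarith
  have key : m ^ 2 * ((1 - κ) * D ^ 2) ≤ m ^ 2 * (κ * n ^ 2) :=
    calc m ^ 2 * ((1 - κ) * D ^ 2) = (1 - κ) * (m * D) ^ 2 := by ring
      _ ≤ (1 - κ) * (n * X) := by gcongr
      _ = n * ((1 - κ) * X) := by ring
      _ ≤ n * (κ * (n * m ^ 2)) := by gcongr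
      _ = m ^ 2 * (κ * n ^ 2) := by ring
  exact le_of_mul_le_mul_left key (by positivity)

end SignDecomposition

lemma le_sqrt_div_sqrt_mul_of_one_sub_mul_sq_le {x y κ : ℝ} (hx : 0 ≤ x) (hy : 0 ≤ y)
    (hκ : κ < 1) (h : (1 - κ) * x ^ 2 ≤ κ * y ^ 2) : x ≤ √κ / √(1 - κ) * y := by
  rw [div_mul_eq_mul_div, le_div_iff₀ (Real.sqrt_pos.mpr (by linarith))]
  calc x * √(1 - κ) = √((1 - κ) * x ^ 2) := by
        rw [Real.sqrt_mul' _ (sq_nonneg x), Real.sqrt_sq hx, mul_comm]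
    _ ≤ √(κ * y ^ 2) := Real.sqrt_le_sqrt h
    _ = √κ * y := by rw [Real.sqrt_mul' _ (sq_nonneg y), Real.sqrt_sq hy]

theorem support_size_bounds_general {V : Type*} [Fintype V]
    (hV : 2 ≤ Fintype.card V)
    (a : V → V → ℝ) (hsym : ∀ u v, a u v = a v u) (hnn : ∀ u v, 0 ≤ a u v)
    (d μ μ₂ : ℝ) (hd : 0 < d) (hrow : ∀ u, ∑ v, a u v = d)
    (hray : ∀ g : V → ℝ, (∑ v, g v) = 0 →
      (∑ u, ∑ v, a u v * g u * g v) ≤ d * μ₂ * ∑ v, g v ^ 2)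
    (f : V → ℝ) (heig : ∀ u, ∑ v, a u v * f v = d * μ * f u)
    (horth : (∑ v, f v) = 0) (hnz : ∀ v, f v ≠ 0)
    (hκ : 0 < (1 + μ) / (1 - μ₂) ∧ (1 + μ) / (1 - μ₂) ≤ 1 / 5)
    (hsupp : (Finset.univ.filter fun v => f v < 0).card ≤
      (Finset.univ.filter fun v => 0 < f v).card) :
    ((Finset.univ.filter fun v => 0 < f v).card : ℝ) ≤
        ((1 + Real.sqrt ((1 + μ) / (1 - μ₂)) / Real.sqrt (1 - (1 + μ) / (1 - μ₂))) / 2) *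
          (Fintype.card V : ℝ) ∧
      ((Finset.univ.filter fun v => f v < 0).card : ℝ) ≥
        ((1 - Real.sqrt ((1 + μ) / (1 - μ₂)) / Real.sqrt (1 - (1 + μ) / (1 - μ₂))) / 2) *
          (Fintype.card V : ℝ) := by
  set κ := (1 + μ) / (1 - μ₂) with hκ_def
  obtain ⟨hκ_pos, hκ_le⟩ := hκ
  have : Nonempty V := Fintype.card_pos_iff.mp (by omega)
  have hμ : 0 ≤ 1 + μ := one_add_nonneg_of_eigen hsym hnn hrow hd heig
    fun h => hnz (Classical.arbitrary V) (congrFun h _)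
  have hμ₂ : 0 < 1 - μ₂ := by
    by_contra! h
    exact hκ_pos.not_ge (div_nonpos_of_nonneg_of_nonpos hμ h)
  have hdec : ∑ v, (f v - fStr f v) ^ 2 ≤ κ * ∑ v, f v ^ 2 := by
    rw [sum_congr rfl fun v _ => sub_fStr_sq (hnz v), hκ_def, div_mul_eq_mul_div,
      le_div_iff₀ hμ₂, mul_comm]
    exact one_sub_mul_sum_abs_sub_mean_sq_le hsym hnn hrow hd hray heig
  have hcard : (#{v | 0 < f v} : ℝ) + #{v | f v < 0} = Fintype.card V := by
    exact_mod_cast card_pos_add_card_neg hnz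
  have hgap := le_sqrt_div_sqrt_mul_of_one_sub_mul_sq_le
    (sub_nonneg.mpr (by exact_mod_cast hsupp)) (Nat.cast_nonneg _) (by linarith)
    (one_sub_mul_sq_card_sub_card_le hnz horth (by linarith) hdec)
  constructor <;> linarith

/-- Under the hypotheses of the decomposition lemma with `κ ∈ (0, 1/5]` and
`|supp(f₊)| ≥ |supp(f₋)|`, the support sizes satisfy `|supp(f₊)| ≤ ((1+ς)/2)n` and
`|supp(f₋)| ≥ ((1-ς)/2)n`, with `ς = √κ/√(1-κ)`. -/
theorem support_size_bounds {V : Type*} [Fintype V]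
    (hV : 2 ≤ Fintype.card V)
    (a : V → V → ℝ) (hsym : ∀ u v, a u v = a v u) (hnn : ∀ u v, 0 ≤ a u v)
    (d μ μ₂ : ℝ) (hd : 0 < d) (hrow : ∀ u, ∑ v, a u v = d)
    (hray : ∀ g : V → ℝ, (∑ v, g v) = 0 →
      (∑ u, ∑ v, a u v * g u * g v) ≤ d * μ₂ * ∑ v, g v ^ 2)
    (hμ₂ : μ₂ ≠ 1)
    (f : V → ℝ) (heig : ∀ u, ∑ v, a u v * f v = d * μ * f u)
    (horth : (∑ v, f v) = 0) (hnz : ∀ v, f v ≠ 0)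
    (hκ : 0 < (1 + μ) / (1 - μ₂) ∧ (1 + μ) / (1 - μ₂) ≤ 1 / 5)
    (hsupp : (Finset.univ.filter fun v => f v < 0).card ≤
      (Finset.univ.filter fun v => 0 < f v).card) :
    ((Finset.univ.filter fun v => 0 < f v).card : ℝ) ≤
        ((1 + Real.sqrt ((1 + μ) / (1 - μ₂)) / Real.sqrt (1 - (1 + μ) / (1 - μ₂))) / 2) *
          (Fintype.card V : ℝ) ∧
      ((Finset.univ.filter fun v => f v < 0).card : ℝ) ≥
        ((1 - Real.sqrt ((1 + μ) / (1 - μ₂)) / Real.sqrt (1 - (1 + μ) / (1 - μ₂))) / 2) *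
          (Fintype.card V : ℝ) :=
  support_size_bounds_general hV a hsym hnn d μ μ₂ hd hrow hray f heig horth hnz hκ hsupp
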